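/- Assume in addition that a·(k(s)² + c·b²) − b·k'(s) > 0 for all s (so γ_α is regular). Then the geodesic curvature of the α-evolutoid, k_α(s) := ⟨γ_α(s) ∧_c γ_α'(s), γ_α''(s)⟩_c / (⟨γ_α'(s), γ_α'(s)⟩_c)^{3/2}, is given by k_α(s) = (k(s)² + c·b²)^{3/2} / (a·(k(s)² + c·b²) − b·k'(s)) for all s. -/

import Mathlib

noncomputable section

open Real

/-- The bilinear form `⟨x,y⟩_c = c·x₁y₁ + x₂y₂ + x₃y₃` on `ℝ³`. -/
def ip (c : ℝ) (x y : ℝ × ℝ × ℝ) : ℝ :=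
  c * x.1 * y.1 + x.2.1 * y.2.1 + x.2.2 * y.2.2

/-- The product `x ∧_c y = (c(x₂y₃ − x₃y₂), x₃y₁ − x₁y₃, x₁y₂ − x₂y₁)`. -/
def wedge (c : ℝ) (x y : ℝ × ℝ × ℝ) : ℝ × ℝ × ℝ :=
  (c * (x.2.1 * y.2.2 - x.2.2 * y.2.1),
   x.2.2 * y.1 - x.1 * y.2.2,
   x.1 * y.2.1 - x.2.1 * y.1)

/-- `sin_c`: `sinh` when `c = -1`, `sin` when `c = 1`. -/
def sinc (c x : ℝ) : ℝ := if c = -1 then Real.sinh x else Real.sin x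

/-- `cos_c`: `cosh` when `c = -1`, `cos` when `c = 1`. -/
def cosc (c x : ℝ) : ℝ := if c = -1 then Real.cosh x else Real.cos x

/-- `tan_c = sin_c / cos_c`. -/
def tanc (c x : ℝ) : ℝ := sinc c x / cosc c x

/-- Inverse hyperbolic tangent. -/
def arctanh (x : ℝ) : ℝ := Real.log ((1 + x) / (1 - x)) / 2

/-- `arctan_c`: `arctanh` when `c = -1`, `arctan` when `c = 1`. -/
def arctanc (c x : ℝ) : ℝ := if c = -1 then arctanh x else Real.arctan x

lemma hc_cases {c : ℝ} (hc2 : c * c = 1) : c = 1 ∨ c = -1 := by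
  have h : (c - 1) * (c + 1) = 0 := by linear_combination hc2
  rcases mul_eq_zero.mp h with h | h
  · left; linarith
  · right; linarith

lemma ip_comm (c : ℝ) (x y : ℝ × ℝ × ℝ) : ip c x y = ip c y x := by
  simp only [ip]; ring

lemma trip {c : ℝ} (hc2 : c * c = 1) (x y z : ℝ × ℝ × ℝ) :
    wedge c x (wedge c y z) = (c * ip c x z) • y - (c * ip c x y) • z := by
  rcases hc_cases hc2 with h | h <;> subst h <;>
    simp only [wedge, ip, Prod.ext_iff, Prod.smul_fst, Prod.smul_snd, Prod.fst_sub,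
      Prod.snd_sub, smul_eq_mul] <;>
  refine ⟨by ring, by ring, by ring⟩

lemma wedge_antisymm (c : ℝ) (x y : ℝ × ℝ × ℝ) : wedge c x y = - wedge c y x := by
  simp only [wedge, Prod.ext_iff, Prod.fst_neg, Prod.snd_neg]
  refine ⟨by ring, by ring, by ring⟩

lemma ip_wedge_left {c : ℝ} (hc2 : c * c = 1) (x y : ℝ × ℝ × ℝ) :
    ip c x (wedge c x y) = 0 := by
  rcases hc_cases hc2 with h | h <;> subst h <;> simp only [ip, wedge] <;> ring

lemma ip_wedge_right {c : ℝ} (hc2 : c * c = 1) (x y : ℝ × ℝ × ℝ) :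
    ip c y (wedge c x y) = 0 := by
  rcases hc_cases hc2 with h | h <;> subst h <;> simp only [ip, wedge] <;> ring

lemma lagrange {c : ℝ} (hc2 : c * c = 1) (x y : ℝ × ℝ × ℝ) :
    ip c (wedge c x y) (wedge c x y) = c * (ip c x x * ip c y y - (ip c x y) ^ 2) := by
  rcases hc_cases hc2 with h | h <;> subst h <;> simp only [ip, wedge] <;> ring

lemma span {c : ℝ} (hc2 : c * c = 1) {g T w : ℝ × ℝ × ℝ}
    (hgg : ip c g g = c) (hTT : ip c T T = 1) (hgT : ip c g T = 0)
    (h1 : ip c w g = 0) (h2 : ip c w T = 0) (h3 : ip c w (wedge c g T) = 0) :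
    w = 0 := by
  have hc0 : c ≠ 0 := by rcases hc_cases hc2 with h | h <;> subst h <;> norm_num
  have hwE : wedge c w (wedge c g T) = 0 := by
    rw [trip hc2, h1, h2]; simp
  have hEw : wedge c (wedge c g T) w = 0 := by
    rw [wedge_antisymm, hwE, neg_zero]
  have hEE : ip c (wedge c g T) (wedge c g T) = 1 := by
    rw [lagrange hc2, hgg, hTT, hgT]
    linear_combination hc2
  have key := trip hc2 (wedge c g T) (wedge c g T) w
  rw [hEw, hEE, ip_comm c _ w, h3] at key
  have : wedge c (wedge c g T) 0 = 0 := by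
    simp [wedge, Prod.ext_iff]
  rw [this] at key
  have : (c * 1) • w = 0 := by
    rw [eq_comm, sub_eq_zero] at key
    simpa using key.symm
  simpa [hc0] using this

lemma wedge_expand (c : ℝ) (x y z : ℝ × ℝ × ℝ) (p1 q1 r1 p2 q2 r2 : ℝ) :
    wedge c (p1 • x + q1 • y + r1 • z) (p2 • x + q2 • y + r2 • z) =
      (p1 * q2 - q1 * p2) • wedge c x y + (p1 * r2 - r1 * p2) • wedge c x z +
      (q1 * r2 - r1 * q2) • wedge c y z := by
  simp only [wedge, Prod.ext_iff, Prod.smul_fst, Prod.smul_snd, Prod.fst_add, Prod.snd_add,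
    smul_eq_mul]
  refine ⟨by ring, by ring, by ring⟩

lemma ip_expand (c : ℝ) (x y z w : ℝ × ℝ × ℝ) (p q r : ℝ) :
    ip c w (p • x + q • y + r • z) = p * ip c w x + q * ip c w y + r * ip c w z := by
  simp only [ip, Prod.smul_fst, Prod.smul_snd, Prod.fst_add, Prod.snd_add, smul_eq_mul]
  ring

lemma ip_expand_left (c : ℝ) (x y z w : ℝ × ℝ × ℝ) (p q r : ℝ) :
    ip c (p • x + q • y + r • z) w = p * ip c x w + q * ip c y w + r * ip c z w := by
  simp only [ip, Prod.smul_fst, Prod.smul_snd, Prod.fst_add, Prod.snd_add, smul_eq_mul]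
  ring

section derivs
variable {c : ℝ} {f g : ℝ → ℝ × ℝ × ℝ} {f' g' : ℝ × ℝ × ℝ} {x : ℝ}

lemma hasDerivAt_ip (hf : HasDerivAt f f' x) (hg : HasDerivAt g g' x) :
    HasDerivAt (fun s => ip c (f s) (g s)) (ip c f' (g x) + ip c (f x) g') x := by
  have hf1 : HasDerivAt (fun s => (f s).1) f'.1 x := hf.fst
  have hf2 : HasDerivAt (fun s => (f s).2.1) f'.2.1 x := hf.snd.fst
  have hf3 : HasDerivAt (fun s => (f s).2.2) f'.2.2 x := hf.snd.snd
  have hg1 : HasDerivAt (fun s => (g s).1) g'.1 x := hg.fst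
  have hg2 : HasDerivAt (fun s => (g s).2.1) g'.2.1 x := hg.snd.fst
  have hg3 : HasDerivAt (fun s => (g s).2.2) g'.2.2 x := hg.snd.snd
  have h : HasDerivAt (fun s => c * (f s).1 * (g s).1 + (f s).2.1 * (g s).2.1
      + (f s).2.2 * (g s).2.2)
      (((c * f'.1) * (g x).1 + (c * (f x).1) * g'.1)
        + (f'.2.1 * (g x).2.1 + (f x).2.1 * g'.2.1)
        + (f'.2.2 * (g x).2.2 + (f x).2.2 * g'.2.2)) x := by
    have h1 : HasDerivAt (fun s => c * (f s).1 * (g s).1)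
        ((c * f'.1) * (g x).1 + (c * (f x).1) * g'.1) x := by
      have := (hf1.const_mul c).mul hg1
      exact this.congr_deriv (by ring)
    exact (h1.add (hf2.mul hg2)).add (hf3.mul hg3)
  have hv : ip c f' (g x) + ip c (f x) g' =
      ((c * f'.1) * (g x).1 + (c * (f x).1) * g'.1)
        + (f'.2.1 * (g x).2.1 + (f x).2.1 * g'.2.1)
        + (f'.2.2 * (g x).2.2 + (f x).2.2 * g'.2.2) := by
    simp only [ip]; ring
  rw [hv]; exact h

lemma hasDerivAt_wedge (hf : HasDerivAt f f' x) (hg : HasDerivAt g g' x) :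
    HasDerivAt (fun s => wedge c (f s) (g s)) (wedge c f' (g x) + wedge c (f x) g') x := by
  have hf1 : HasDerivAt (fun s => (f s).1) f'.1 x := hf.fst
  have hf2 : HasDerivAt (fun s => (f s).2.1) f'.2.1 x := hf.snd.fst
  have hf3 : HasDerivAt (fun s => (f s).2.2) f'.2.2 x := hf.snd.snd
  have hg1 : HasDerivAt (fun s => (g s).1) g'.1 x := hg.fst
  have hg2 : HasDerivAt (fun s => (g s).2.1) g'.2.1 x := hg.snd.fst
  have hg3 : HasDerivAt (fun s => (g s).2.2) g'.2.2 x := hg.snd.snd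
  have h1 : HasDerivAt (fun s => c * ((f s).2.1 * (g s).2.2 - (f s).2.2 * (g s).2.1))
      (c * ((f'.2.1 * (g x).2.2 + (f x).2.1 * g'.2.2)
        - (f'.2.2 * (g x).2.1 + (f x).2.2 * g'.2.1))) x :=
    ((hf2.mul hg3).sub (hf3.mul hg2)).const_mul c
  have h2 : HasDerivAt (fun s => (f s).2.2 * (g s).1 - (f s).1 * (g s).2.2)
      ((f'.2.2 * (g x).1 + (f x).2.2 * g'.1) - (f'.1 * (g x).2.2 + (f x).1 * g'.2.2)) x :=
    (hf3.mul hg1).sub (hf1.mul hg3)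
  have h3 : HasDerivAt (fun s => (f s).1 * (g s).2.1 - (f s).2.1 * (g s).1)
      ((f'.1 * (g x).2.1 + (f x).1 * g'.2.1) - (f'.2.1 * (g x).1 + (f x).2.1 * g'.1)) x :=
    (hf1.mul hg2).sub (hf2.mul hg1)
  have h := h1.prodMk (h2.prodMk h3)
  have hv : wedge c f' (g x) + wedge c (f x) g' =
      (c * ((f'.2.1 * (g x).2.2 + (f x).2.1 * g'.2.2)
        - (f'.2.2 * (g x).2.1 + (f x).2.2 * g'.2.1)),
       (f'.2.2 * (g x).1 + (f x).2.2 * g'.1) - (f'.1 * (g x).2.2 + (f x).1 * g'.2.2),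
       (f'.1 * (g x).2.1 + (f x).1 * g'.2.1) - (f'.2.1 * (g x).1 + (f x).2.1 * g'.1)) := by
    simp only [wedge, Prod.ext_iff, Prod.fst_add, Prod.snd_add]
    refine ⟨by ring, by ring, by ring⟩
  rw [hv]; exact h
end derivs

variable {N : WithTop ℕ∞}

lemma contDiff_comp1 {f : ℝ → ℝ × ℝ × ℝ} (hf : ContDiff ℝ N f) :
    ContDiff ℝ N (fun s => (f s).1) := contDiff_fst.comp hf

lemma contDiff_comp2 {f : ℝ → ℝ × ℝ × ℝ} (hf : ContDiff ℝ N f) :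
    ContDiff ℝ N (fun s => (f s).2.1) := contDiff_fst.comp (contDiff_snd.comp hf)

lemma contDiff_comp3 {f : ℝ → ℝ × ℝ × ℝ} (hf : ContDiff ℝ N f) :
    ContDiff ℝ N (fun s => (f s).2.2) := contDiff_snd.comp (contDiff_snd.comp hf)

lemma contDiff_ip (c : ℝ) {f g : ℝ → ℝ × ℝ × ℝ} (hf : ContDiff ℝ N f)
    (hg : ContDiff ℝ N g) : ContDiff ℝ N (fun s => ip c (f s) (g s)) := by
  simp only [ip]
  exact (((contDiff_const.mul (contDiff_comp1 hf)).mul (contDiff_comp1 hg)).add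
    ((contDiff_comp2 hf).mul (contDiff_comp2 hg))).add
    ((contDiff_comp3 hf).mul (contDiff_comp3 hg))

lemma contDiff_wedge (c : ℝ) {f g : ℝ → ℝ × ℝ × ℝ} (hf : ContDiff ℝ N f)
    (hg : ContDiff ℝ N g) : ContDiff ℝ N (fun s => wedge c (f s) (g s)) := by
  simp only [wedge]
  exact (contDiff_const.mul (((contDiff_comp2 hf).mul (contDiff_comp3 hg)).sub
      ((contDiff_comp3 hf).mul (contDiff_comp2 hg)))).prodMk
    ((((contDiff_comp3 hf).mul (contDiff_comp1 hg)).sub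
      ((contDiff_comp1 hf).mul (contDiff_comp3 hg))).prodMk
      (((contDiff_comp1 hf).mul (contDiff_comp2 hg)).sub
      ((contDiff_comp2 hf).mul (contDiff_comp1 hg))))

lemma exp_arctanh {x : ℝ} (h1 : -1 < x) (h2 : x < 1) :
    Real.exp (arctanh x) = Real.sqrt (1 + x) / Real.sqrt (1 - x) := by
  have hp : (0:ℝ) < 1 + x := by linarith
  have hq : (0:ℝ) < 1 - x := by linarith
  have hp2 : Real.sqrt (1+x) ^ 2 = 1 + x := Real.sq_sqrt hp.le
  have hq2 : Real.sqrt (1-x) ^ 2 = 1 - x := Real.sq_sqrt hq.le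
  have hppos : 0 < Real.sqrt (1+x) := Real.sqrt_pos.mpr hp
  have hqpos : 0 < Real.sqrt (1-x) := Real.sqrt_pos.mpr hq
  have hfrac : (1+x)/(1-x) = (Real.sqrt (1+x) / Real.sqrt (1-x))^2 := by
    rw [div_pow, hp2, hq2]
  have : arctanh x = Real.log (Real.sqrt (1+x) / Real.sqrt (1-x)) := by
    unfold arctanh
    rw [hfrac, Real.log_pow]
    push_cast; ring
  rw [this, Real.exp_log (by positivity)]

lemma cosh_arctanh {x : ℝ} (h1 : -1 < x) (h2 : x < 1) :
    Real.cosh (arctanh x) = 1 / Real.sqrt (1 - x^2) := by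
  have hp : (0:ℝ) < 1 + x := by linarith
  have hq : (0:ℝ) < 1 - x := by linarith
  have hp2 : Real.sqrt (1+x) ^ 2 = 1 + x := Real.sq_sqrt hp.le
  have hq2 : Real.sqrt (1-x) ^ 2 = 1 - x := Real.sq_sqrt hq.le
  have hppos : 0 < Real.sqrt (1+x) := Real.sqrt_pos.mpr hp
  have hqpos : 0 < Real.sqrt (1-x) := Real.sqrt_pos.mpr hq
  have hsq : Real.sqrt (1 - x^2) = Real.sqrt (1+x) * Real.sqrt (1-x) := by
    rw [show 1 - x^2 = (1+x)*(1-x) by ring, Real.sqrt_mul hp.le]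
  rw [Real.cosh_eq, Real.exp_neg, exp_arctanh h1 h2, hsq]
  rw [inv_div]
  field_simp
  nlinarith [hp2, hq2, hppos, hqpos]

lemma sinh_arctanh {x : ℝ} (h1 : -1 < x) (h2 : x < 1) :
    Real.sinh (arctanh x) = x / Real.sqrt (1 - x^2) := by
  have hp : (0:ℝ) < 1 + x := by linarith
  have hq : (0:ℝ) < 1 - x := by linarith
  have hp2 : Real.sqrt (1+x) ^ 2 = 1 + x := Real.sq_sqrt hp.le
  have hq2 : Real.sqrt (1-x) ^ 2 = 1 - x := Real.sq_sqrt hq.le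
  have hppos : 0 < Real.sqrt (1+x) := Real.sqrt_pos.mpr hp
  have hqpos : 0 < Real.sqrt (1-x) := Real.sqrt_pos.mpr hq
  have hsq : Real.sqrt (1 - x^2) = Real.sqrt (1+x) * Real.sqrt (1-x) := by
    rw [show 1 - x^2 = (1+x)*(1-x) by ring, Real.sqrt_mul hp.le]
  rw [Real.sinh_eq, Real.exp_neg, exp_arctanh h1 h2, hsq, inv_div]
  field_simp
  nlinarith [hp2, hq2, hppos, hqpos]

-- new lemmas
lemma wedge_self (c : ℝ) (x : ℝ × ℝ × ℝ) : wedge c x x = 0 := by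
  simp only [wedge, Prod.ext_iff, Prod.fst_zero, Prod.snd_zero]
  refine ⟨by ring, by ring, by ring⟩

lemma wedge_right₂ (c : ℝ) (x y z : ℝ × ℝ × ℝ) (p q : ℝ) :
    wedge c x (p • y + q • z) = p • wedge c x y + q • wedge c x z := by
  simp only [wedge, Prod.ext_iff, Prod.smul_fst, Prod.smul_snd, Prod.fst_add, Prod.snd_add,
    smul_eq_mul]
  refine ⟨by ring, by ring, by ring⟩

lemma solve3 (x y w : ℝ × ℝ × ℝ) (c k : ℝ) (h : w + c • x + (-k) • y = 0) :
    w = (-c) • x + k • y := by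
  simp only [Prod.ext_iff, Prod.smul_fst, Prod.smul_snd, Prod.fst_add, Prod.snd_add,
    smul_eq_mul, Prod.fst_zero, Prod.snd_zero] at h ⊢
  obtain ⟨h1, h2, h3⟩ := h
  exact ⟨by linarith, by linarith, by linarith⟩

lemma collectB (x y z : ℝ × ℝ × ℝ) (p q r dp dq dr cc kk : ℝ) :
    (p • y + dp • x) + (q • ((-cc) • x + kk • z) + dq • y) + (r • ((-kk) • y) + dr • z)
      = (dp - cc * q) • x + (p + dq - kk * r) • y + (kk * q + dr) • z := by
  simp only [Prod.ext_iff, Prod.smul_fst, Prod.smul_snd, Prod.fst_add, Prod.snd_add,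
    smul_eq_mul]
  refine ⟨by ring, by ring, by ring⟩

lemma ip_frame {c : ℝ} (hc2 : c * c = 1) {g T E : ℝ × ℝ × ℝ}
    (hgg : ip c g g = c) (hTT : ip c T T = 1) (hgT : ip c g T = 0)
    (hE : E = wedge c g T) (p1 q1 r1 p2 q2 r2 : ℝ) :
    ip c (p1 • g + q1 • T + r1 • E) (p2 • g + q2 • T + r2 • E)
      = c * (p1 * p2) + q1 * q2 + r1 * r2 := by
  have hgE : ip c g E = 0 := by rw [hE]; exact ip_wedge_left hc2 g T
  have hTE : ip c T E = 0 := by rw [hE]; exact ip_wedge_right hc2 g T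
  have hEE : ip c E E = 1 := by
    rw [hE, lagrange hc2, hgg, hTT, hgT]; linear_combination hc2
  rw [ip_expand_left, ip_expand, ip_expand, ip_expand, hgg, hTT, hEE, hgT, hgE, hTE,
    ip_comm c T g, ip_comm c E g, ip_comm c E T, hgT, hgE, hTE]
  ring

lemma wedge_frame {c : ℝ} (hc2 : c * c = 1) {g T E : ℝ × ℝ × ℝ}
    (hgg : ip c g g = c) (hTT : ip c T T = 1) (hgT : ip c g T = 0)
    (hE : E = wedge c g T) (p1 q1 r1 p2 q2 r2 : ℝ) :
    wedge c (p1 • g + q1 • T + r1 • E) (p2 • g + q2 • T + r2 • E)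
      = ((q1 * r2 - r1 * q2) * c) • g + (-(p1 * r2 - r1 * p2)) • T + (p1 * q2 - q1 * p2) • E := by
  have hgE : wedge c g E = -T := by
    rw [hE, trip hc2, hgT, hgg, mul_zero, zero_smul]
    rw [show c * c = 1 from hc2, one_smul, zero_sub]
  have hTE : wedge c T E = c • g := by
    rw [hE, trip hc2, hTT, ip_comm c T g, hgT, mul_one, mul_zero, zero_smul, sub_zero]
  rw [wedge_expand, ← hE, hgE, hTE]
  simp only [Prod.ext_iff, Prod.smul_fst, Prod.smul_snd, Prod.fst_add, Prod.snd_add,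
    smul_eq_mul, Prod.fst_neg, Prod.snd_neg]
  refine ⟨by ring, by ring, by ring⟩

-- coefficient identities for the first derivative of the evolutoid
lemma coefA1 (c a b U K K' D : ℝ) (hU : U ≠ 0) (hU2 : U^2 = K^2 + c*b^2)
    (hD : D = (a*(K^2 + c*b^2) - b*K')/U^3) :
    (K'*U - K*(K*K'/U))/U^2 - c*(a*b/U) = (-(c*b))*D := by
  subst hD
  field_simp
  linear_combination (K' - c*a*b) * hU2

lemma coefA2 (c a b U K K' D : ℝ) (hU : U ≠ 0) (hU2 : U^2 = K^2 + c*b^2)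
    (hab : a^2 + b^2 = 1)
    (hD : D = (a*(K^2 + c*b^2) - b*K')/U^3) :
    K/U + (0*U - a*b*(K*K'/U))/U^2 - K*(b^2/U) = a*(K*D) := by
  subst hD
  field_simp
  linear_combination (K*a^2) * hU2 - (K*U^2) * hab

lemma coefA3 (c a b U K K' D : ℝ) (hU : U ≠ 0) (hU2 : U^2 = K^2 + c*b^2)
    (hD : D = (a*(K^2 + c*b^2) - b*K')/U^3) :
    K*(a*b/U) + (0*U - b^2*(K*K'/U))/U^2 = b*(K*D) := by
  subst hD
  field_simp
  linear_combination (K*a*b) * hU2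

lemma pow_three_half {x : ℝ} (hx : 0 ≤ x) : (x^2) ^ ((3:ℝ)/2) = x^3 := by
  rw [← Real.rpow_natCast x 2, ← Real.rpow_mul hx]
  norm_num

lemma endgame (c a b U K K' D dD dE : ℝ) (hc2 : c*c = 1) (hab : a^2 + b^2 = 1)
    (hU2 : U^2 = K^2 + c*b^2) (hU : 0 < U)
    (hreg : 0 < a*(K^2 + c*b^2) - b*K')
    (hD : D = (a*(K^2 + c*b^2) - b*K')/U^3) :
    (c*((((a*b/U)*(b*(K*D)) - (b^2/U)*(a*(K*D)))*c)
        *((-(c*b))*dD - c*(a*(K*D))))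
      + (-((K/U)*(b*(K*D)) - (b^2/U)*((-(c*b))*D)))
        *((-(c*b))*D + a*dE - K*(b*(K*D)))
      + ((K/U)*(a*(K*D)) - (a*b/U)*((-(c*b))*D))
        *(K*(a*(K*D)) + b*dE))
    / (c*(((-(c*b))*D)*((-(c*b))*D)) + (a*(K*D))*(a*(K*D)) + (b*(K*D))*(b*(K*D))) ^ ((3:ℝ)/2)
    = (K^2 + c*b^2) ^ ((3:ℝ)/2) / (a*(K^2 + c*b^2) - b*K') := by
  have hU0 : U ≠ 0 := ne_of_gt hU
  have hDpos : 0 < D := by rw [hD]; positivity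
  have hden : (c*(((-(c*b))*D)*((-(c*b))*D)) + (a*(K*D))*(a*(K*D)) + (b*(K*D))*(b*(K*D)))
      = (D*U)^2 := by
    linear_combination (c*b^2*D^2)*hc2 + (K^2*D^2)*hab - D^2*hU2
  have hnum : (c*((((a*b/U)*(b*(K*D)) - (b^2/U)*(a*(K*D)))*c)
        *((-(c*b))*dD - c*(a*(K*D))))
      + (-((K/U)*(b*(K*D)) - (b^2/U)*((-(c*b))*D)))
        *((-(c*b))*D + a*dE - K*(b*(K*D)))
      + ((K/U)*(a*(K*D)) - (a*b/U)*((-(c*b))*D))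
        *(K*(a*(K*D)) + b*dE)) = D^2 * U^3 := by
    have hP : (c*((((a*b/U)*(b*(K*D)) - (b^2/U)*(a*(K*D)))*c)
        *((-(c*b))*dD - c*(a*(K*D))))
      + (-((K/U)*(b*(K*D)) - (b^2/U)*((-(c*b))*D)))
        *((-(c*b))*D + a*dE - K*(b*(K*D)))
      + ((K/U)*(a*(K*D)) - (a*b/U)*((-(c*b))*D))
        *(K*(a*(K*D)) + b*dE)) =
      (c*((((a*b)*(b*(K*D)) - (b^2)*(a*(K*D)))*c)
        *((-(c*b))*dD - c*(a*(K*D))))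
      + (-((K)*(b*(K*D)) - (b^2)*((-(c*b))*D)))
        *((-(c*b))*D + a*dE - K*(b*(K*D)))
      + ((K)*(a*(K*D)) - (a*b)*((-(c*b))*D))
        *(K*(a*(K*D)) + b*dE)) / U := by
      ring
    rw [hP, div_eq_iff hU0]
    linear_combination (-(K^2*D^2 + U^2*D^2 + c*b^2*D^2)) * hU2
      + (K^4*D^2 + c*b^2*K^2*D^2) * hab
  have hkey : a*(K^2 + c*b^2) - b*K' = D * U^3 := by
    rw [hD]; field_simp
  rw [hnum, hden, pow_three_half (by positivity : (0:ℝ) ≤ D*U), hkey,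
    show K^2 + c*b^2 = U^2 from hU2.symm, pow_three_half hU.le]
  rw [div_eq_div_iff (by positivity) (by positivity)]
  ring


lemma cosc_sinc_val {c b K : ℝ} (hc : c = -1 ∨ c = 1) (hb0 : 0 ≤ b) (hb1 : b ≤ 1)
    (hk1 : c = 1 → 0 < K) (hk2 : c = -1 → 1 < K) :
    cosc c (arctanc c (b/K)) = K / Real.sqrt (K^2 + c*b^2) ∧
    sinc c (arctanc c (b/K)) = b / Real.sqrt (K^2 + c*b^2) := by
  rcases hc with h | h
  · subst h
    have e1 : ∀ x:ℝ, cosc (-1) x = Real.cosh x := fun x => if_pos rfl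
    have e2 : ∀ x:ℝ, sinc (-1) x = Real.sinh x := fun x => if_pos rfl
    have e3 : ∀ x:ℝ, arctanc (-1) x = arctanh x := fun x => if_pos rfl
    rw [e1, e2, e3]
    have hK : (0:ℝ) < K := by have := hk2 rfl; linarith
    have hx1 : (-1:ℝ) < b / K := by
      have : (0:ℝ) ≤ b / K := div_nonneg hb0 hK.le
      linarith
    have hx2 : b / K < 1 := by
      rw [div_lt_one hK]; have := hk2 rfl; linarith
    have hX : (0:ℝ) < 1 - (b/K)^2 := by nlinarith
    have key : Real.sqrt (K^2 + (-1)*b^2) = Real.sqrt (1 - (b/K)^2) * K := by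
      rw [show K^2 + (-1)*b^2 = (1 - (b/K)^2) * K^2 by field_simp; try ring,
        Real.sqrt_mul hX.le, Real.sqrt_sq hK.le]
    have hs0 : Real.sqrt (1 - (b/K)^2) ≠ 0 := ne_of_gt (Real.sqrt_pos.mpr hX)
    rw [cosh_arctanh hx1 hx2, sinh_arctanh hx1 hx2, key]
    constructor
    · rw [div_eq_div_iff (Real.sqrt_pos.mpr hX).ne' (by positivity)]
      ring
    · rw [div_eq_div_iff (Real.sqrt_pos.mpr hX).ne' (by positivity)]
      field_simp
  · subst h
    have hne : ¬ (1:ℝ) = -1 := by norm_num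
    have e1 : ∀ x:ℝ, cosc 1 x = Real.cos x := fun x => if_neg hne
    have e2 : ∀ x:ℝ, sinc 1 x = Real.sin x := fun x => if_neg hne
    have e3 : ∀ x:ℝ, arctanc 1 x = Real.arctan x := fun x => if_neg hne
    rw [e1, e2, e3]
    have hK : (0:ℝ) < K := hk1 rfl
    have hX : (0:ℝ) < 1 + (b/K)^2 := by positivity
    have key : Real.sqrt (K^2 + 1*b^2) = Real.sqrt (1 + (b/K)^2) * K := by
      rw [show K^2 + 1*b^2 = (1 + (b/K)^2) * K^2 by field_simp; try ring,
        Real.sqrt_mul hX.le, Real.sqrt_sq hK.le]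
    rw [Real.cos_arctan, Real.sin_arctan, key]
    have hs0 : Real.sqrt (1 + (b/K)^2) ≠ 0 := ne_of_gt (Real.sqrt_pos.mpr hX)
    constructor
    · rw [div_eq_div_iff hs0 (by positivity)]
      ring
    · rw [div_eq_div_iff hs0 (by positivity)]
      field_simp

theorem evolutoid_geodesic_curvature
    (c : ℝ) (hc : c ∈ ({-1, 1} : Set ℝ))
    (γ : ℝ → ℝ × ℝ × ℝ) (hγ : ContDiff ℝ (⊤ : ℕ∞) γ)
    (hγM : ∀ s, ip c (γ s) (γ s) = c)
    (hunit : ∀ s, ip c (deriv γ s) (deriv γ s) = 1)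
    (t : ℝ → ℝ × ℝ × ℝ) (ht : t = deriv γ)
    (e : ℝ → ℝ × ℝ × ℝ) (he : ∀ s, e s = wedge c (γ s) (t s))
    (k : ℝ → ℝ) (hk : ∀ s, k s = ip c (deriv (deriv γ) s) (e s))
    (α : ℝ) (hα : α ∈ Set.Icc 0 (Real.pi / 2))
    (a b : ℝ) (ha : a = Real.cos α) (hb : b = Real.sin α)
    (v : ℝ → ℝ × ℝ × ℝ) (hv : ∀ s, v s = a • t s + b • e s)
    (hconv₁ : c = 1 → ∀ s, 0 < k s) (hconv₂ : c = -1 → ∀ s, 1 < k s)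
    (ρ : ℝ → ℝ) (hρ : ∀ s, ρ s = arctanc c (b / k s))
    (γα : ℝ → ℝ × ℝ × ℝ)
    (hγα : ∀ s, γα s = cosc c (ρ s) • γ s + sinc c (ρ s) • v s)
    (hreg : ∀ s, 0 < a * (k s ^ 2 + c * b ^ 2) - b * deriv k s)
    (kα : ℝ → ℝ)
    (hkα : ∀ s, kα s = ip c (wedge c (γα s) (deriv γα s)) (deriv (deriv γα) s) /
      (ip c (deriv γα s) (deriv γα s)) ^ ((3 : ℝ) / 2)) :
    ∀ s, kα s = (k s ^ 2 + c * b ^ 2) ^ ((3 : ℝ) / 2) /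
      (a * (k s ^ 2 + c * b ^ 2) - b * deriv k s) := by

  simp only [Set.mem_insert_iff, Set.mem_singleton_iff] at hc
  have hc2 : c * c = 1 := by rcases hc with h | h <;> rw [h] <;> norm_num
  have hb0 : 0 ≤ b := by
    rw [hb]
    exact Real.sin_nonneg_of_nonneg_of_le_pi hα.1 (le_trans hα.2 (by linarith [Real.pi_pos]))
  have hb1 : b ≤ 1 := by rw [hb]; exact Real.sin_le_one α
  have hab : a^2 + b^2 = 1 := by rw [ha, hb]; linear_combination Real.sin_sq_add_cos_sq α
  have hkpos : ∀ s, 0 < k s := by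
    intro s; rcases hc with h | h
    · have := hconv₂ h s; linarith
    · exact hconv₁ h s
  have hQpos : ∀ s, 0 < k s^2 + c*b^2 := by
    intro s; rcases hc with h | h
    · have h2 := hconv₂ h s; rw [h]; nlinarith
    · have h2 := hconv₁ h s; rw [h]; nlinarith
  -- smoothness
  have hγ' : ContDiff ℝ ((⊤:ℕ∞):WithTop ℕ∞) γ := hγ.of_le (by simp)
  have hγdiff : Differentiable ℝ γ := hγ'.differentiable (by simp)
  have hts : ContDiff ℝ ((⊤:ℕ∞):WithTop ℕ∞) t := by
    rw [ht]; exact (contDiff_infty_iff_deriv.mp hγ').2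
  have htdiff : Differentiable ℝ t := hts.differentiable (by simp)
  have hefun : e = fun s => wedge c (γ s) (t s) := funext he
  have hes : ContDiff ℝ ((⊤:ℕ∞):WithTop ℕ∞) e := by
    rw [hefun]; exact contDiff_wedge c hγ' hts
  have hdts : ContDiff ℝ ((⊤:ℕ∞):WithTop ℕ∞) (deriv t) := (contDiff_infty_iff_deriv.mp hts).2
  have hkfun : k = fun s => ip c (deriv t s) (e s) := by
    funext s; rw [hk s, ht]
  have hks : ContDiff ℝ ((⊤:ℕ∞):WithTop ℕ∞) k := by
    rw [hkfun]; exact contDiff_ip c hdts hes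
  have hkdiff : Differentiable ℝ k := hks.differentiable (by simp)
  have hk's : ContDiff ℝ ((⊤:ℕ∞):WithTop ℕ∞) (deriv k) := (contDiff_infty_iff_deriv.mp hks).2
  have hγt : ∀ s, HasDerivAt γ (t s) s := by
    intro s; rw [ht]; exact (hγdiff s).hasDerivAt
  have htd : ∀ s, HasDerivAt t (deriv t s) s := fun s => (htdiff s).hasDerivAt
  have hk' : ∀ s, HasDerivAt k (deriv k s) s := fun s => (hkdiff s).hasDerivAt
  -- frame identities
  have hTT : ∀ s, ip c (t s) (t s) = 1 := by intro s; rw [ht]; exact hunit s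
  have hγT : ∀ s, ip c (γ s) (t s) = 0 := by
    intro s
    have h1 : HasDerivAt (fun s => ip c (γ s) (γ s)) 0 s := by
      have heq : (fun s => ip c (γ s) (γ s)) = fun _ => c := funext hγM
      rw [heq]; exact hasDerivAt_const s c
    have h3 := h1.unique (hasDerivAt_ip (c := c) (hγt s) (hγt s))
    rw [ip_comm c (t s) (γ s)] at h3
    linarith
  have hγT' : ∀ s, ip c (γ s) (deriv t s) = -1 := by
    intro s
    have h1 : HasDerivAt (fun s => ip c (γ s) (t s)) 0 s := by
      have heq : (fun s => ip c (γ s) (t s)) = fun _ => 0 := funext hγT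
      rw [heq]; exact hasDerivAt_const s 0
    have h3 := h1.unique (hasDerivAt_ip (c := c) (hγt s) (htd s))
    rw [ip_comm c (t s) (t s), hTT s] at h3
    linarith
  have hTT' : ∀ s, ip c (t s) (deriv t s) = 0 := by
    intro s
    have h1 : HasDerivAt (fun s => ip c (t s) (t s)) 0 s := by
      have heq : (fun s => ip c (t s) (t s)) = fun _ => 1 := funext hTT
      rw [heq]; exact hasDerivAt_const s 1
    have h3 := h1.unique (hasDerivAt_ip (c := c) (htd s) (htd s))
    rw [ip_comm c (deriv t s) (t s)] at h3
    linarith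
  have hkE : ∀ s, ip c (deriv t s) (e s) = k s := fun s => by rw [hk s, ht]
  have hγE : ∀ s, ip c (γ s) (e s) = 0 := fun s => by
    rw [he s]; exact ip_wedge_left hc2 _ _
  have hTE : ∀ s, ip c (t s) (e s) = 0 := fun s => by
    rw [he s]; exact ip_wedge_right hc2 _ _
  have hEE : ∀ s, ip c (e s) (e s) = 1 := fun s => by
    rw [he s, lagrange hc2, hγM s, hTT s, hγT s]; linear_combination hc2
  -- Frenet equation for t
  have hFrenet : ∀ s, deriv t s = (-c) • γ s + (k s) • e s := by
    intro s
    have hW : ((1:ℝ) • deriv t s + c • γ s + (-(k s)) • e s) = 0 := by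
      apply span hc2 (hγM s) (hTT s) (hγT s)
      · rw [ip_expand_left, ip_comm c (deriv t s) (γ s), hγT' s, hγM s,
          ip_comm c (e s) (γ s), hγE s]
        linear_combination hc2
      · rw [ip_expand_left, ip_comm c (deriv t s) (t s), hTT' s, hγT s,
          ip_comm c (e s) (t s), hTE s]
        ring
      · rw [ip_expand_left, ← he s, hkE s, hγE s, hEE s]
        ring
    have := solve3 (γ s) (e s) ((1:ℝ) • deriv t s) c (k s) (by rw [hW])
    rw [one_smul] at this
    exact this
  -- derivative of e
  have hed : ∀ s, HasDerivAt e ((-(k s)) • t s) s := by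
    intro s
    have h : HasDerivAt (fun s => wedge c (γ s) (t s))
        (wedge c (t s) (t s) + wedge c (γ s) (deriv t s)) s :=
      hasDerivAt_wedge (hγt s) (htd s)
    rw [← hefun] at h
    have hwγe : wedge c (γ s) (e s) = -(t s) := by
      rw [he s, trip hc2, hγT s, hγM s, mul_zero, zero_smul, hc2, one_smul, zero_sub]
    have hval : wedge c (t s) (t s) + wedge c (γ s) (deriv t s) = (-(k s)) • t s := by
      rw [hFrenet s, wedge_right₂, wedge_self c (t s), wedge_self c (γ s), hwγe,
        smul_zero, smul_neg, ← neg_smul, zero_add, zero_add]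
    rw [hval] at h
    exact h
  -- explicit trig values
  obtain ⟨u, hu⟩ : ∃ u : ℝ → ℝ, u = fun s => Real.sqrt (k s^2 + c*b^2) := ⟨_, rfl⟩
  have hupos : ∀ s, 0 < u s := fun s => by rw [hu]; exact Real.sqrt_pos.mpr (hQpos s)
  have hu0 : ∀ s, u s ≠ 0 := fun s => ne_of_gt (hupos s)
  have hu2 : ∀ s, (u s)^2 = k s^2 + c*b^2 := fun s => by
    rw [hu]; exact Real.sq_sqrt (hQpos s).le
  have hCS : ∀ s, cosc c (ρ s) = k s / u s ∧ sinc c (ρ s) = b / u s := by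
    intro s
    rw [hρ s, hu]
    exact cosc_sinc_val hc hb0 hb1 (fun h => hconv₁ h s)
      (fun h => hconv₂ h s)
  -- derivative of u
  have hu' : ∀ s, HasDerivAt u (k s * deriv k s / u s) s := by
    intro s
    have hQd : HasDerivAt (fun s => k s^2 + c*b^2) (2 * k s * deriv k s) s := by
      have h := ((hk' s).pow 2).add_const (c*b^2)
      exact h.congr_deriv (by norm_num)
    have h2 := hQd.sqrt (ne_of_gt (hQpos s))
    have h0 : Real.sqrt (k s ^ 2 + c * b ^ 2) ≠ 0 :=
      ne_of_gt (Real.sqrt_pos.mpr (hQpos s))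
    rw [hu]
    convert h2 using 1
    field_simp
  obtain ⟨D, hD⟩ : ∃ D : ℝ → ℝ,
      D = fun s => (a*(k s^2 + c*b^2) - b*deriv k s)/(u s)^3 := ⟨_, rfl⟩
  have hDs : ∀ s, D s = (a*(k s^2 + c*b^2) - b*deriv k s)/(u s)^3 := fun s => by rw [hD]
  have hDd : ∀ s, DifferentiableAt ℝ D s := by
    intro s; rw [hD]
    apply DifferentiableAt.div
    · exact ((((hkdiff s).pow 2).add_const (c*b^2)).const_mul a).sub
        ((hk's.differentiable (by simp) s).const_mul b)
    · exact (hu' s).differentiableAt.pow 3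
    · exact pow_ne_zero 3 (hu0 s)
  obtain ⟨E, hE⟩ : ∃ E : ℝ → ℝ, E = fun s => k s * D s := ⟨_, rfl⟩
  have hEd : ∀ s, DifferentiableAt ℝ E s := by
    intro s; rw [hE]; exact (hkdiff s).mul (hDd s)
  have hEs : ∀ s, E s = k s * D s := fun s => by rw [hE]
  -- evolutoid in the frame
  have hγαE : γα = fun s => (k s / u s) • γ s + (a*b / u s) • t s + (b^2 / u s) • e s := by
    funext s
    rw [hγα s, hv s, (hCS s).1, (hCS s).2]
    simp only [Prod.ext_iff, Prod.smul_fst, Prod.smul_snd, Prod.fst_add, Prod.snd_add,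
      smul_eq_mul]
    refine ⟨by ring, by ring, by ring⟩
  -- first derivative of the evolutoid
  have hγαd : ∀ s, HasDerivAt γα
      (((-(c*b))*D s) • γ s + (a*(k s*D s)) • t s + (b*(k s*D s)) • e s) s := by
    intro s
    rw [hγαE]
    have h1 : HasDerivAt (fun s => k s / u s)
        ((deriv k s * u s - k s * (k s * deriv k s / u s)) / u s ^ 2) s :=
      (hk' s).div (hu' s) (hu0 s)
    have h2 : HasDerivAt (fun s => a*b / u s)
        ((0 * u s - a*b * (k s * deriv k s / u s)) / u s ^ 2) s :=
      (hasDerivAt_const s (a*b)).div (hu' s) (hu0 s)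
    have h3 : HasDerivAt (fun s => b^2 / u s)
        ((0 * u s - b^2 * (k s * deriv k s / u s)) / u s ^ 2) s :=
      (hasDerivAt_const s (b^2)).div (hu' s) (hu0 s)
    have htd' : HasDerivAt t ((-c) • γ s + k s • e s) s := hFrenet s ▸ htd s
    have h := ((h1.smul (hγt s)).add (h2.smul htd')).add (h3.smul (hed s))
    rw [collectB] at h
    rw [coefA1 c a b (u s) (k s) (deriv k s) (D s) (hu0 s) (hu2 s) (hDs s),
      coefA2 c a b (u s) (k s) (deriv k s) (D s) (hu0 s) (hu2 s) hab (hDs s),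
      coefA3 c a b (u s) (k s) (deriv k s) (D s) (hu0 s) (hu2 s) (hDs s)] at h
    exact h
  have hγαd_eq : deriv γα
      = fun s => (((-(c*b))*D s) • γ s + (a*E s) • t s + (b*E s) • e s) := by
    funext s
    rw [(hγαd s).deriv, hEs s]
  -- second derivative of the evolutoid
  have hγαdd : ∀ s, HasDerivAt (deriv γα)
      ((((-(c*b))*deriv D s) - c*(a*E s)) • γ s
        + (((-(c*b))*D s) + a*deriv E s - k s*(b*E s)) • t s
        + ((k s*(a*E s) + b*deriv E s)) • e s) s := by
    intro s
    rw [hγαd_eq]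
    have hf1 : HasDerivAt (fun s => (-(c*b))*D s) ((-(c*b))*deriv D s) s :=
      ((hDd s).hasDerivAt).const_mul _
    have hf2 : HasDerivAt (fun s => a*E s) (a*deriv E s) s :=
      ((hEd s).hasDerivAt).const_mul a
    have hf3 : HasDerivAt (fun s => b*E s) (b*deriv E s) s :=
      ((hEd s).hasDerivAt).const_mul b
    have htd' : HasDerivAt t ((-c) • γ s + k s • e s) s := hFrenet s ▸ htd s
    have h := ((hf1.smul (hγt s)).add (hf2.smul htd')).add (hf3.smul (hed s))
    rw [collectB] at h
    exact h
  -- final computation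
  intro s
  have hV1 : deriv γα s
      = ((-(c*b))*D s) • γ s + (a*(k s*D s)) • t s + (b*(k s*D s)) • e s := (hγαd s).deriv
  have hV2 := (hγαdd s).deriv
  have hV0 : γα s = (k s / u s) • γ s + (a*b / u s) • t s + (b^2 / u s) • e s := by
    rw [hγαE]
  rw [hkα s, hV1, hV2, hV0]
  simp only [hEs]
  rw [wedge_frame hc2 (hγM s) (hTT s) (hγT s) (he s)]
  rw [ip_frame hc2 (hγM s) (hTT s) (hγT s) (he s)]
  rw [ip_frame hc2 (hγM s) (hTT s) (hγT s) (he s)]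
  exact endgame c a b (u s) (k s) (deriv k s) (D s) (deriv D s) (deriv E s) hc2 hab
    (hu2 s) (hupos s) (hreg s) (hDs s)
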